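/- arXiv:1608.04835 — 6 statements merged into one kernel-verified Lean document; each statement's English description precedes it below -/
import Mathlib

section
/- For every positive integer n and integer k, the polynomial identity ∑_{i=0}^{n-1} C(k-1, i) · t^i · (1-t)^{n-1-i} = ∑_{i=0}^{n-1} C(k-n+i-1, i) · t^i holds in the polynomial ring ℚ[t], where k ≥ n + 1. -/
open Polynomial Finset

/-! Write `k = n + m + 1`. Splitting off the last term of the left-hand side expresses it as
`1 - x` times the same sum for `(n - 1, m + 1)`, plus `C(n + m, n - 1) x ^ (n - 1)`; induction on `n`
then reduces everything to the telescoping identity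
`(1 - x) ∑_{i<n} C(m+1+i, i) x^i + C(m+1+n, n) x^n = ∑_{i≤n} C(m+i, i) x^i`, a consequence of Pascal's rule. -/

section

variable {R : Type*} [CommRing R] (x : R)

theorem one_sub_mul_sum_range_choose_add_mul_pow (m n : ℕ) :
    (1 - x) * ∑ i ∈ range n, ((m + 1 + i).choose i : R) * x ^ i
        + ((m + 1 + n).choose n : R) * x ^ n =
      ∑ i ∈ range (n + 1), ((m + i).choose i : R) * x ^ i := by
  induction n with
  | zero => simp
  | succ n ih =>
    have pascal : ((m + 1 + (n + 1)).choose (n + 1) : R) =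
        ((m + 1 + n).choose n : R) + ((m + (n + 1)).choose (n + 1) : R) := by
      rw [show m + 1 + (n + 1) = (m + 1 + n) + 1 by omega, Nat.choose_succ_succ,
        show m + (n + 1) = m + 1 + n by omega, Nat.cast_add]
    rw [sum_range_succ _ (n + 1), ← ih, sum_range_succ, pascal]
    ring

theorem sum_range_choose_mul_pow_mul_one_sub_pow (m n : ℕ) :
    ∑ i ∈ range n, ((n + m).choose i : R) * x ^ i * (1 - x) ^ (n - 1 - i) =
      ∑ i ∈ range n, ((m + i).choose i : R) * x ^ i := by
  induction n generalizing m with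
  | zero => simp
  | succ n ih =>
    have factor_one_sub : ∑ i ∈ range n, ((n + 1 + m).choose i : R) * x ^ i * (1 - x) ^ (n - i) =
        (1 - x) * ∑ i ∈ range n, ((n + (m + 1)).choose i : R) * x ^ i * (1 - x) ^ (n - 1 - i) := by
      rw [mul_sum]
      refine sum_congr rfl fun i hi => ?_
      rw [show n - i = n - 1 - i + 1 by have := mem_range.mp hi; omega,
        show n + (m + 1) = n + 1 + m by omega]
      ring
    rw [Nat.add_sub_cancel, sum_range_succ, factor_one_sub, ih, Nat.sub_self, pow_zero, mul_one,
      show n + 1 + m = m + 1 + n by omega, one_sub_mul_sum_range_choose_add_mul_pow]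

end

theorem sum_formula_coefficient_identity_general (n k : ℕ) (hk : n + 1 ≤ k) :
    ∑ i ∈ Finset.range n,
        (Nat.choose (k - 1) i : Polynomial ℚ) * X ^ i * (1 - X) ^ (n - 1 - i) =
      ∑ i ∈ Finset.range n, (Nat.choose (k - n + i - 1) i : Polynomial ℚ) * X ^ i := by
  obtain ⟨m, rfl⟩ : ∃ m, k = n + m + 1 := ⟨k - n - 1, by omega⟩
  rw [Nat.add_sub_cancel, sum_range_choose_mul_pow_mul_one_sub_pow]
  refine sum_congr rfl fun i _ => ?_
  rw [show n + m + 1 - n + i - 1 = m + i by omega]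

theorem sum_formula_coefficient_identity (n k : ℕ) (hn : 1 ≤ n) (hk : n + 1 ≤ k) :
    ∑ i ∈ Finset.range n,
        (Nat.choose (k - 1) i : Polynomial ℚ) * X ^ i * (1 - X) ^ (n - 1 - i) =
      ∑ i ∈ Finset.range n, (Nat.choose (k - n + i - 1) i : Polynomial ℚ) * X ^ i :=
  sum_formula_coefficient_identity_general n k hk
end

section
/- Let n be a positive integer and x, y₁, y₂ indeterminates. Then, as an identity of rational functions over ℚ, ∑_{j=0}^{n} (-1)^j · (y₁ - j + 1)_{n-1} · (y₂ - j)_n / (j! · (n-j)! · (x-j)_{n+1}) = ∑_{j=0}^{n} (-1)^j · (y₁ - x - n + j + 1)_{n-1} · (y₂ - x - n + j)_n / (j! · (n-j)! · (x-j)_{n+1}). -/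
/-!
Write `w j = (-1)^j / (j! (n-j)!)` and `f t = (y₁+1-t)_{n-1} (y₂-t)_n`, so that the two sides are
`∑ⱼ w j f(j) / (x-j)_{n+1}` and `∑ⱼ w j f(x-j+n) / (x-j)_{n+1}`. Partial fractions give
`g(u) / (u)_{n+1} = Q(u) + ∑ᵢ w i g(-i) / (u+i)` with `Q = g /ₘ (X)_{n+1}`. Applied to the constant
`f(j)` this turns the left side into `∑ᵢⱼ w i w j f(j) / (x-j+i)`; applied to `g = f(· + n)` it turns
the right side into `∑ⱼ w j Q(x-j) + ∑ᵢⱼ w i w j f(n-i) / (x-j+i)`. Since `deg f ≤ 2n`, `deg Q < n`,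
so `∑ⱼ w j Q(x-j)`, an `n`-th finite difference, vanishes. Finally the involution
`(i, j) ↦ (n-j, n-i)` fixes `w i w j` and `x-j+i` and exchanges the two double sums.
-/

open Finset Polynomial
open scoped Nat

namespace Lagrange

variable {F ι : Type*} [Field F] [DecidableEq ι] {s : Finset ι} {v : ι → F} {x : F}

theorem eval_div_eval_nodal (hvs : Set.InjOn v s) (hx : ∀ i ∈ s, x ≠ v i) (g : F[X]) :
    g.eval x / (nodal s v).eval x =
      (g /ₘ nodal s v).eval x + ∑ i ∈ s, nodalWeight s v i * (x - v i)⁻¹ * g.eval (v i) := by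
  have hrem : g %ₘ nodal s v = interpolate s v (fun i ↦ g.eval (v i)) := by
    refine eq_interpolate_of_eval_eq _ hvs ?_ fun i hi ↦ ?_
    · rw [← degree_nodal (R := F)]
      exact degree_modByMonic_lt g nodal_monic
    · simp [modByMonic_eq_sub_mul_div, eval_nodal_at_node hi]
  have hNx := eval_nodal_not_at_node hx
  calc g.eval x / (nodal s v).eval x
      = ((g %ₘ nodal s v).eval x + (nodal s v).eval x * (g /ₘ nodal s v).eval x) /
          (nodal s v).eval x := by rw [← eval_mul, ← eval_add, modByMonic_add_div]
    _ = _ := by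
      rw [hrem, eval_interpolate_not_at_node _ hx]
      field_simp
      ring

end Lagrange

theorem ascPochhammer_eq_nodal {R : Type*} [CommRing R] (n : ℕ) :
    ascPochhammer R n = Lagrange.nodal (range n) (fun i : ℕ ↦ -(i : R)) := by
  induction n with
  | zero => simp
  | succ n ih =>
    rw [ascPochhammer_succ_right, ih, Lagrange.nodal_eq, Lagrange.nodal_eq, prod_range_succ]
    simp

theorem prod_erase_range_natCast_sub {R : Type*} [CommRing R] {n i : ℕ} (hi : i ≤ n) :
    ∏ j ∈ (range (n + 1)).erase i, ((j : R) - i) = (-1) ^ i * i ! * (n - i)! := by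
  have hsplit : (range (n + 1)).erase i = range i ∪ Ico (i + 1) (n + 1) := by
    ext j
    simp only [mem_erase, mem_range, mem_union, mem_Ico]
    omega
  have hdisj : Disjoint (range i) (Ico (i + 1) (n + 1)) :=
    disjoint_left.mpr fun j hj hj' ↦ by simp only [mem_range, mem_Ico] at hj hj'; omega
  have hbelow : ∏ j ∈ range i, ((j : R) - i) = (-1) ^ i * i ! :=
    calc ∏ j ∈ range i, ((j : R) - i) = ∏ j ∈ range i, (-1 * ((j : R) + 1)) := by
          rw [← prod_range_reflect]
          refine prod_congr rfl fun j hj ↦ ?_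
          have : j < i := mem_range.mp hj
          push_cast [Nat.cast_sub (by omega : j ≤ i - 1), Nat.cast_sub (by omega : 1 ≤ i)]
          ring
      _ = (-1) ^ i * i ! := by
          rw [prod_mul_distrib, prod_const, card_range, ← prod_range_add_one_eq_factorial]
          push_cast
          rfl
  have habove : ∏ j ∈ Ico (i + 1) (n + 1), ((j : R) - i) = (n - i)! := by
    rw [prod_Ico_eq_prod_range, show n + 1 - (i + 1) = n - i by omega,
      ← prod_range_add_one_eq_factorial, Nat.cast_prod]
    refine prod_congr rfl fun j _ ↦ ?_
    push_cast
    ring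
  rw [hsplit, prod_union hdisj, hbelow, habove]

theorem nodalWeight_range_neg_natCast {K : Type*} [Field K] {n i : ℕ} (hi : i ≤ n) :
    Lagrange.nodalWeight (range (n + 1)) (fun j : ℕ ↦ -(j : K)) i =
      (-1) ^ i / (i ! * (n - i)!) := by
  rw [Lagrange.nodalWeight, prod_inv_distrib]
  simp only [neg_sub_neg]
  rw [prod_erase_range_natCast_sub hi, mul_assoc, mul_inv, ← inv_pow, inv_neg, inv_one,
    div_eq_mul_inv]

theorem div_eval_ascPochhammer {K : Type*} [Field K] [CharZero K] {n : ℕ} {x : K}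
    (hx : (ascPochhammer K (n + 1)).eval x ≠ 0) (g : K[X]) :
    g.eval x / (ascPochhammer K (n + 1)).eval x =
      (g /ₘ ascPochhammer K (n + 1)).eval x +
        ∑ i ∈ range (n + 1), (-1) ^ i / (i ! * (n - i)! : K) * (x + i)⁻¹ * g.eval (-i : K) := by
  rw [ascPochhammer_eq_nodal] at hx ⊢
  have hnodes : ∀ i ∈ range (n + 1), x ≠ -(i : K) := fun i hi h ↦
    hx (h ▸ Lagrange.eval_nodal_at_node (v := fun i : ℕ ↦ -(i : K)) hi)
  have hinj : Set.InjOn (fun i : ℕ ↦ -(i : K)) (range (n + 1)) := fun a _ b _ h ↦ by simpa using h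
  rw [Lagrange.eval_div_eval_nodal hinj hnodes]
  refine congrArg _ (sum_congr rfl fun i hi ↦ ?_)
  rw [nodalWeight_range_neg_natCast (mem_range_succ_iff.mp hi), sub_neg_eq_add]

theorem Polynomial.degree_divByMonic_lt_of_natDegree_lt_add {R : Type*} [CommRing R]
    [Nontrivial R] {p q : R[X]} (hq : q.Monic) {m : ℕ} (h : p.natDegree < q.natDegree + m) :
    (p /ₘ q).degree < m := by
  by_cases h0 : p /ₘ q = 0
  · simp [h0]
  have hqp : q.natDegree ≤ p.natDegree :=
    natDegree_le_natDegree (not_lt.mp (mt (divByMonic_eq_zero_iff hq).mpr h0))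
  rw [degree_eq_natDegree h0, natDegree_divByMonic p hq, Nat.cast_lt]
  omega

theorem Polynomial.sum_range_succ_neg_one_pow_div_mul_eval_sub_eq_zero {K : Type*} [Field K]
    [CharZero K] {n : ℕ} {p : K[X]} (hp : p.degree < n) (x : K) :
    ∑ j ∈ range (n + 1), (-1) ^ j / (j ! * (n - j)! : K) * p.eval (x - j) = 0 := by
  rcases eq_or_ne p 0 with rfl | hp0
  · simp
  have hΔ := congrFun
    (fwdDiff_iter_eq_zero_of_degree_lt ((natDegree_lt_iff_degree_lt hp0).mpr hp)) (x - n)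
  rw [fwdDiff_iter_eq_sum_shift, Pi.zero_apply] at hΔ
  have hn : (n ! : K) ≠ 0 := Nat.cast_ne_zero.mpr n.factorial_ne_zero
  rw [← sum_range_reflect]
  calc _ = (n ! : K)⁻¹ * ∑ k ∈ range (n + 1),
        ((-1 : ℤ) ^ (n - k) * n.choose k) • p.eval (x - n + k • 1) := by
        rw [mul_sum]
        refine sum_congr rfl fun k hk ↦ ?_
        have hk : k ≤ n := mem_range_succ_iff.mp hk
        rw [Nat.add_sub_cancel, Nat.sub_sub_self hk, Nat.cast_sub hk, zsmul_eq_mul,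
          Int.cast_mul, Int.cast_pow, Int.cast_neg, Int.cast_one, Int.cast_natCast,
          Nat.cast_choose K hk, nsmul_one, sub_sub_eq_add_sub, add_sub_right_comm]
        field_simp
    _ = 0 := by rw [hΔ, mul_zero]

theorem neg_one_pow_div_factorial_sub {K : Type*} [Field K] {n i : ℕ} (hi : i ≤ n) :
    (-1) ^ (n - i) / ((n - i)! * (n - (n - i))! : K) =
      (-1) ^ n * ((-1) ^ i / (i ! * (n - i)!)) := by
  have hsign : (-1 : K) ^ n = (-1) ^ (n - i) * (-1) ^ i := by
    rw [← pow_add, Nat.sub_add_cancel hi]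
  rw [Nat.sub_sub_self hi, hsign, mul_comm ((i ! : K)), ← mul_div_assoc, mul_assoc (_ ^ (n - i)),
    ← mul_pow]
  norm_num

theorem sum_range_sum_range_reflect {K : Type*} [Field K] (n : ℕ) (x : K) (h : ℕ → K) :
    ∑ j ∈ range (n + 1), ∑ i ∈ range (n + 1),
        (-1) ^ j / (j ! * (n - j)! : K) * ((-1) ^ i / (i ! * (n - i)!)) * (x - j + i)⁻¹ *
          h (n - i) =
      ∑ j ∈ range (n + 1), ∑ i ∈ range (n + 1),
        (-1) ^ j / (j ! * (n - j)! : K) * ((-1) ^ i / (i ! * (n - i)!)) * (x - j + i)⁻¹ *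
          h j := by
  set a : ℕ → ℕ → K := fun j i ↦
    (-1) ^ j / (j ! * (n - j)! : K) * ((-1) ^ i / (i ! * (n - i)!)) * (x - j + i)⁻¹
  have reflect (f : ℕ → K) : ∑ j ∈ range (n + 1), f (n - j) = ∑ j ∈ range (n + 1), f j := by
    simpa using sum_range_reflect f (n + 1)
  have ha : ∀ i ≤ n, ∀ j ≤ n, a (n - i) (n - j) = a j i := fun i hi j hj ↦ by
    have hsq : (-1 : K) ^ n * (-1) ^ n = 1 := by rw [← mul_pow]; norm_num
    have hpole : x - ((n - i : ℕ) : K) + ((n - j : ℕ) : K) = x - j + i := by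
      rw [Nat.cast_sub hi, Nat.cast_sub hj]
      ring
    simp only [a]
    rw [neg_one_pow_div_factorial_sub hi, neg_one_pow_div_factorial_sub hj, hpole]
    linear_combination a j i * hsq
  calc ∑ j ∈ range (n + 1), ∑ i ∈ range (n + 1), a j i * h (n - i)
      = ∑ j ∈ range (n + 1), ∑ i ∈ range (n + 1), a i j * h i := by
        rw [← reflect]
        refine sum_congr rfl fun j hj ↦ ?_
        rw [← reflect]
        refine sum_congr rfl fun i hi ↦ ?_
        rw [Nat.sub_sub_self (mem_range_succ_iff.mp hi),
          ha j (mem_range_succ_iff.mp hj) i (mem_range_succ_iff.mp hi)]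
    _ = ∑ j ∈ range (n + 1), ∑ i ∈ range (n + 1), a j i * h j := sum_comm

theorem sum_div_eval_ascPochhammer_reflect {K : Type*} [Field K] [CharZero K] {n : ℕ}
    {f : K[X]} (hf : f.natDegree ≤ 2 * n) {x : K}
    (hx : ∀ j : ℕ, j ≤ n → (ascPochhammer K (n + 1)).eval (x - j) ≠ 0) :
    ∑ j ∈ range (n + 1),
        (-1) ^ j * f.eval (j : K) / (j ! * (n - j)! * (ascPochhammer K (n + 1)).eval (x - j)) =
      ∑ j ∈ range (n + 1),
        (-1) ^ j * f.eval (x - j + n) /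
          (j ! * (n - j)! * (ascPochhammer K (n + 1)).eval (x - j)) := by
  set P := ascPochhammer K (n + 1)
  set F := f.comp (X + C (n : K))
  set w : ℕ → K := fun j ↦ (-1) ^ j / (j ! * (n - j)!)
  have hterm (j : ℕ) (a : K) :
      (-1) ^ j * a / (j ! * (n - j)! * P.eval (x - j)) = w j * (a / P.eval (x - j)) := by
    simp only [w]
    ring
  have hlhs : ∀ j ∈ range (n + 1), w j * (f.eval (j : K) / P.eval (x - j)) =
      ∑ i ∈ range (n + 1), w j * w i * (x - j + i)⁻¹ * f.eval (j : K) := by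
    intro j hj
    have hC : C (f.eval (j : K)) /ₘ P = 0 := by
      rw [divByMonic_eq_zero_iff (monic_ascPochhammer K (n + 1)),
        degree_eq_natDegree (monic_ascPochhammer K (n + 1)).ne_zero, ascPochhammer_natDegree]
      exact degree_C_le.trans_lt (by exact_mod_cast Nat.succ_pos n)
    rw [← eval_C (a := f.eval (j : K)) (x := x - j),
      div_eval_ascPochhammer (hx j (mem_range_succ_iff.mp hj)), hC, eval_zero, zero_add, mul_sum]
    simp only [eval_C, w, mul_assoc]
  have hrhs : ∀ j ∈ range (n + 1), w j * (f.eval (x - j + n) / P.eval (x - j)) =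
      w j * (F /ₘ P).eval (x - j) +
        ∑ i ∈ range (n + 1), w j * w i * (x - j + i)⁻¹ * f.eval ((n - i : ℕ) : K) := by
    intro j hj
    have hF : f.eval (x - j + n) = F.eval (x - j) := by simp [F]
    rw [hF, div_eval_ascPochhammer (hx j (mem_range_succ_iff.mp hj)), mul_add, mul_sum]
    refine congrArg _ (sum_congr rfl fun i hi ↦ ?_)
    rw [Nat.cast_sub (mem_range_succ_iff.mp hi)]
    simp only [F, w, eval_comp, eval_add, eval_X, eval_C]
    ring_nf
  have hQ : (F /ₘ P).degree < n := by
    refine degree_divByMonic_lt_of_natDegree_lt_add (monic_ascPochhammer K (n + 1)) ?_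
    rw [ascPochhammer_natDegree, natDegree_comp, natDegree_X_add_C, mul_one]
    omega
  simp_rw [hterm]
  rw [sum_congr rfl hlhs, sum_congr rfl hrhs, sum_add_distrib,
    sum_range_succ_neg_one_pow_div_mul_eval_sub_eq_zero hQ, zero_add]
  exact (sum_range_sum_range_reflect n x (fun i ↦ f.eval (i : K))).symm

theorem hypergeometric_duality_general (n : ℕ) (x y₁ y₂ : ℝ)
    (hx : ∀ j : ℕ, j ≤ n → (ascPochhammer ℝ (n + 1)).eval (x - j) ≠ 0) :
    ∑ j ∈ Finset.range (n + 1),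
        (-1 : ℝ) ^ j * (ascPochhammer ℝ (n - 1)).eval (y₁ - j + 1) *
            (ascPochhammer ℝ n).eval (y₂ - j) /
          (j.factorial * (n - j).factorial * (ascPochhammer ℝ (n + 1)).eval (x - j)) =
      ∑ j ∈ Finset.range (n + 1),
        (-1 : ℝ) ^ j * (ascPochhammer ℝ (n - 1)).eval (y₁ - x - n + j + 1) *
            (ascPochhammer ℝ n).eval (y₂ - x - n + j) /
          (j.factorial * (n - j).factorial * (ascPochhammer ℝ (n + 1)).eval (x - j)) := by
  set f : ℝ[X] :=
    (ascPochhammer ℝ (n - 1)).comp (C (y₁ + 1) - X) * (ascPochhammer ℝ n).comp (C y₂ - X)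
  have hf (t : ℝ) : f.eval t =
      (ascPochhammer ℝ (n - 1)).eval (y₁ + 1 - t) * (ascPochhammer ℝ n).eval (y₂ - t) := by
    simp [f, eval_comp]
  have hdeg : f.natDegree ≤ 2 * n := by
    refine natDegree_mul_le.trans ?_
    simp only [natDegree_comp, ascPochhammer_natDegree, ← neg_sub X, natDegree_neg,
      natDegree_X_sub_C, mul_one]
    omega
  convert sum_div_eval_ascPochhammer_reflect hdeg hx using 3 with j hj j hj
  all_goals rw [hf, mul_assoc]; ring_nf

theorem hypergeometric_duality (n : ℕ) (hn : 1 ≤ n) (x y₁ y₂ : ℝ)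
    (hx : ∀ j : ℕ, j ≤ n → (ascPochhammer ℝ (n + 1)).eval (x - j) ≠ 0) :
    ∑ j ∈ Finset.range (n + 1),
        (-1 : ℝ) ^ j * (ascPochhammer ℝ (n - 1)).eval (y₁ - j + 1) *
            (ascPochhammer ℝ n).eval (y₂ - j) /
          (j.factorial * (n - j).factorial * (ascPochhammer ℝ (n + 1)).eval (x - j)) =
      ∑ j ∈ Finset.range (n + 1),
        (-1 : ℝ) ^ j * (ascPochhammer ℝ (n - 1)).eval (y₁ - x - n + j + 1) *
            (ascPochhammer ℝ n).eval (y₂ - x - n + j) /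
          (j.factorial * (n - j).factorial * (ascPochhammer ℝ (n + 1)).eval (x - j)) :=
  hypergeometric_duality_general n x y₁ y₂ hx
end

section
/- Let R be a commutative ring, t ∈ R a unit, k > n ≥ 1 integers, and z ∈ R. Suppose (G_i)_{1≤i≤n} are elements of R satisfying ∑_{i=1}^{m} (-t)^{m-i} · C(k-i-1, m-i) · G_i = z for every m with 1 ≤ m ≤ n. Then G_n = (∑_{i=1}^{n} C(k-1-i, n-i) · t^{n-i}) · z. -/
/-!
The system is lower unitriangular: its `m`-th equation is `G m` plus a combination of
`G 1, …, G (m - 1)`, so it has at most one solution, and it suffices to check that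
`G i = S i * z` with `S i = ∑ j ∈ [1, i], C(k-1-j, i-j) t^(i-j)` is one. After exchanging the
two sums, `C(N, d) C(d, b) = C(N, b) C(N - b, d - b)` turns the inner sum into
`C(k-1-j, m-j) (t - t)^(m-j)` by the binomial theorem, and this vanishes unless `j = m`.
-/

open Finset

section Unitriangular

variable {R : Type*} [Ring R]

theorem eq_of_sum_Icc_mul_eq_of_diag_eq_one {a : ℕ → ℕ → R} (ha : ∀ m, a m m = 1)
    {x y : ℕ → R} {n : ℕ}
    (h : ∀ m, 1 ≤ m → m ≤ n →
      ∑ i ∈ Icc 1 m, a m i * x i = ∑ i ∈ Icc 1 m, a m i * y i) :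
    ∀ m, 1 ≤ m → m ≤ n → x m = y m := by
  intro m
  induction m using Nat.strong_induction_on with
  | _ m ih =>
    intro hm hmn
    have hlower : ∑ i ∈ Icc 1 (m - 1), a m i * x i = ∑ i ∈ Icc 1 (m - 1), a m i * y i :=
      sum_congr rfl fun i hi => by
        rw [mem_Icc] at hi
        rw [ih i (by omega) hi.1 (by omega)]
    have hsplit := h m hm hmn
    obtain ⟨m', rfl⟩ : ∃ m', m = m' + 1 := ⟨m - 1, by omega⟩
    rw [sum_Icc_succ_top (by omega), sum_Icc_succ_top (by omega), ha, one_mul, one_mul] at hsplit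
    simp only [add_tsub_cancel_right] at hlower
    rwa [hlower, add_right_inj] at hsplit

end Unitriangular

section BinomialSums

variable {R : Type*} [CommRing R]

theorem add_pow_eq_sum_Icc (x y : R) {j m : ℕ} (hjm : j ≤ m) :
    (x + y) ^ (m - j) =
      ∑ i ∈ Icc j m, x ^ (i - j) * y ^ (m - i) * ((m - j).choose (i - j) : R) := by
  rw [add_pow, ← Ico_add_one_right_eq_Icc, sum_Ico_eq_sum_range, Nat.sub_add_comm hjm]
  refine sum_congr rfl fun b hb => ?_
  rw [mem_range] at hb
  rw [Nat.add_sub_cancel_left, show m - (j + b) = m - j - b by omega]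

theorem sum_Icc_neg_pow_mul_choose_mul_choose_mul_pow (t : R) {j m : ℕ} (k : ℕ)
    (hjm : j ≤ m) :
    ∑ i ∈ Icc j m, (-t) ^ (m - i) * ((k - i - 1).choose (m - i) : R) *
        (((k - 1 - j).choose (i - j) : R) * t ^ (i - j)) =
      ((k - 1 - j).choose (m - j) : R) * (t + -t) ^ (m - j) := by
  rw [add_pow_eq_sum_Icc t (-t) hjm, mul_sum]
  refine sum_congr rfl fun i hi => ?_
  rw [mem_Icc] at hi
  have hchoose := Nat.choose_mul (n := k - 1 - j) (by omega : i - j ≤ m - j)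
  rw [show k - 1 - j - (i - j) = k - i - 1 by omega, show m - j - (i - j) = m - i by omega]
    at hchoose
  have hchooseR : ((k - 1 - j).choose (i - j) : R) * ((k - i - 1).choose (m - i) : R) =
      ((k - 1 - j).choose (m - j) : R) * ((m - j).choose (i - j) : R) := by
    rw [← Nat.cast_mul, ← Nat.cast_mul, hchoose]
  linear_combination (-t) ^ (m - i) * t ^ (i - j) * hchooseR

theorem sum_Icc_neg_pow_mul_choose_mul_sum_Icc_choose_mul_pow (t : R) (k : ℕ) {m : ℕ}
    (hm : 1 ≤ m) :
    ∑ i ∈ Icc 1 m, (-t) ^ (m - i) * ((k - i - 1).choose (m - i) : R) *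
        ∑ j ∈ Icc 1 i, ((k - 1 - j).choose (i - j) : R) * t ^ (i - j) = 1 := by
  simp_rw [mul_sum]
  rw [sum_comm' (t' := Icc 1 m) (s' := fun j => Icc j m) (by intro i j; simp only [mem_Icc]; omega)]
  rw [sum_congr rfl fun j hj =>
    sum_Icc_neg_pow_mul_choose_mul_choose_mul_pow t k (mem_Icc.mp hj).2]
  rw [sum_eq_single_of_mem m (mem_Icc.mpr ⟨hm, le_rfl⟩) fun j hj hjm => by
    rw [add_neg_cancel, zero_pow (by rw [mem_Icc] at hj; omega), mul_zero]]
  simp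

end BinomialSums

theorem sum_formula_inversion_general {R : Type*} [CommRing R] (t z : R)
    (k n : ℕ) (hn : 1 ≤ n) (G : ℕ → R)
    (h : ∀ m : ℕ, 1 ≤ m → m ≤ n →
      ∑ i ∈ Finset.Icc 1 m, (-t) ^ (m - i) * (Nat.choose (k - i - 1) (m - i) : R) * G i = z) :
    G n = (∑ i ∈ Finset.Icc 1 n, (Nat.choose (k - 1 - i) (n - i) : R) * t ^ (n - i)) * z := by
  refine eq_of_sum_Icc_mul_eq_of_diag_eq_one
    (a := fun m i => (-t) ^ (m - i) * ((k - i - 1).choose (m - i) : R))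
    (y := fun i => (∑ j ∈ Icc 1 i, ((k - 1 - j).choose (i - j) : R) * t ^ (i - j)) * z)
    (fun m => by simp) (fun m hm hmn => ?_) n hn le_rfl
  simp_rw [h m hm hmn, ← mul_assoc, ← sum_mul,
    sum_Icc_neg_pow_mul_choose_mul_sum_Icc_choose_mul_pow t k hm, one_mul]

theorem sum_formula_inversion {R : Type*} [CommRing R] (t z : R) (ht : IsUnit t)
    (k n : ℕ) (hn : 1 ≤ n) (hk : n < k) (G : ℕ → R)
    (h : ∀ m : ℕ, 1 ≤ m → m ≤ n →
      ∑ i ∈ Finset.Icc 1 m, (-t) ^ (m - i) * (Nat.choose (k - i - 1) (m - i) : R) * G i = z) :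
    G n = (∑ i ∈ Finset.Icc 1 n, (Nat.choose (k - 1 - i) (n - i) : R) * t ^ (n - i)) * z :=
  sum_formula_inversion_general t z k n hn G h
end

section
/- Euler's decomposition formula: for integers k, l ≥ 2, ζ(k)·ζ(l) = ∑_{i=1}^{k} C(k+l-i-1, l-1) · ζ(k+l-i, i) + ∑_{i=1}^{l} C(k+l-i-1, k-1) · ζ(k+l-i, i). -/
open Finset

/-- The Riemann zeta value `ζ(s) = ∑_{m ≥ 1} 1/m^s`. -/
noncomputable def zetaVal (s : ℕ) : ℝ :=
  ∑' m : ℕ, if 1 ≤ m then 1 / (m : ℝ) ^ s else 0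

/-- The double zeta value `ζ(a,b) = ∑_{m > n ≥ 1} 1/(m^a n^b)`. -/
noncomputable def doubleZeta (a b : ℕ) : ℝ :=
  ∑' p : ℕ × ℕ, if 1 ≤ p.2 ∧ p.2 < p.1 then 1 / ((p.1 : ℝ) ^ a * (p.2 : ℝ) ^ b) else 0

/-!
Iterating `1 / (x * y) = (1 / x + 1 / y) / (x + y)` expands `1 / (x ^ k * y ^ l)` into the terms
`1 / ((x + y) ^ (k + l - i) * x ^ i)` and `1 / ((x + y) ^ (k + l - i) * y ^ i)`; the coefficients
obey Pascal's rule, hence are binomial. Summing this identity over `x = m, y = n ≥ 1` and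
substituting `m + n ↦ m` turns each term into a double zeta value; all terms are nonnegative, so
the absolutely convergent series `ζ(k) ζ(l)` may be split termwise.
-/

theorem sum_Icc_one_eq_sum_range_sub {M : Type*} [AddCommMonoid M] (f : ℕ → M) (n : ℕ) :
    ∑ i ∈ Icc 1 n, f i = ∑ j ∈ range n, f (n - j) := by
  rw [range_eq_Ico, sum_Ico_reflect f 0 n.le_succ, Nat.add_sub_cancel_left, Nat.sub_zero]
  rfl

section PartialFractions

variable {𝕜 : Type*} [Field 𝕜]

/-- For `s = x + y`, `L = l - 1` and `i = k - j`, the terms of the partial fraction expansion of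
`1 / (x ^ k * y ^ l)` that carry a power of `x`. -/
def partialFractionSum (s x : 𝕜) (k L : ℕ) : 𝕜 :=
  ∑ j ∈ range k, ((L + j).choose L : 𝕜) / (s ^ (L + 1 + j) * x ^ (k - j))

theorem partialFractionSum_one (s x : 𝕜) (L : ℕ) :
    partialFractionSum s x 1 L = 1 / (s ^ (L + 1) * x) := by
  simp [partialFractionSum]

theorem partialFractionSum_succ_zero (s x : 𝕜) (k : ℕ) :
    partialFractionSum s x (k + 1) 0 = (partialFractionSum s x k 0 + 1 / x ^ (k + 1)) / s := by
  simp only [partialFractionSum, sum_range_succ', Nat.add_sub_add_right, add_div, sum_div]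
  congr 1
  · refine sum_congr rfl fun j _ => ?_
    simp only [Nat.choose_zero_right]
    ring
  · simp only [Nat.choose_zero_right, Nat.sub_zero]
    ring

theorem partialFractionSum_succ_succ (s x : 𝕜) (k L : ℕ) :
    partialFractionSum s x (k + 1) (L + 1) =
      (partialFractionSum s x (k + 1) L + partialFractionSum s x k (L + 1)) / s := by
  have pascal (j : ℕ) :
      ((L + 1 + j).choose (L + 1) : 𝕜) = (L + j).choose L + (L + j).choose (L + 1) := by
    rw [Nat.add_right_comm, Nat.choose_succ_succ', Nat.cast_add]
  simp only [partialFractionSum]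
  conv_lhs => simp only [pascal, add_div, sum_add_distrib]
  rw [add_div, sum_div, sum_div]
  congr 1
  · refine sum_congr rfl fun j _ => ?_
    ring
  · rw [sum_range_succ']
    simp only [Nat.choose_succ_self, Nat.cast_zero, zero_div, add_zero,
      Nat.add_sub_add_right]
    refine sum_congr rfl fun j _ => ?_
    rw [show L + (j + 1) = L + 1 + j by ring]
    ring

theorem one_div_pow_succ_mul_pow_succ_eq_add_div {x y : 𝕜} (hx : x ≠ 0) (hy : y ≠ 0)
    (hxy : x + y ≠ 0) (a b : ℕ) :
    1 / (x ^ (a + 1) * y ^ (b + 1)) =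
      (1 / (x ^ a * y ^ (b + 1)) + 1 / (x ^ (a + 1) * y ^ b)) / (x + y) := by
  field_simp
  ring

theorem one_div_pow_succ_mul_pow_succ_eq_partialFractionSum {x y : 𝕜} (hx : x ≠ 0)
    (hy : y ≠ 0) (hxy : x + y ≠ 0) :
    ∀ K L : ℕ, 1 / (x ^ (K + 1) * y ^ (L + 1)) =
      partialFractionSum (x + y) x (K + 1) L + partialFractionSum (x + y) y (L + 1) K
  | 0, 0 => by
    simp only [Nat.zero_add, partialFractionSum_one]
    field_simp
    ring
  | 0, L + 1 => by
    rw [one_div_pow_succ_mul_pow_succ_eq_add_div hx hy hxy,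
      one_div_pow_succ_mul_pow_succ_eq_partialFractionSum hx hy hxy 0 L,
      partialFractionSum_succ_zero _ y (L + 1)]
    simp only [Nat.zero_add, partialFractionSum_one]
    field_simp
    ring
  | K + 1, 0 => by
    rw [one_div_pow_succ_mul_pow_succ_eq_add_div hx hy hxy,
      one_div_pow_succ_mul_pow_succ_eq_partialFractionSum hx hy hxy K 0,
      partialFractionSum_succ_zero _ x (K + 1)]
    simp only [Nat.zero_add, partialFractionSum_one]
    field_simp
    ring
  | K + 1, L + 1 => by
    rw [one_div_pow_succ_mul_pow_succ_eq_add_div hx hy hxy,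
      one_div_pow_succ_mul_pow_succ_eq_partialFractionSum hx hy hxy K (L + 1),
      one_div_pow_succ_mul_pow_succ_eq_partialFractionSum hx hy hxy (K + 1) L,
      partialFractionSum_succ_succ _ x (K + 1) L, partialFractionSum_succ_succ _ y (L + 1) K]
    ring

theorem one_div_pow_mul_pow_eq_sum {x y : 𝕜} (hx : x ≠ 0) (hy : y ≠ 0) (hxy : x + y ≠ 0)
    {k l : ℕ} (hk : 1 ≤ k) (hl : 1 ≤ l) :
    1 / (x ^ k * y ^ l) =
      ∑ i ∈ Icc 1 k, ((k + l - i - 1).choose (l - 1) : 𝕜) / ((x + y) ^ (k + l - i) * x ^ i) +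
        ∑ i ∈ Icc 1 l, ((k + l - i - 1).choose (k - 1) : 𝕜) / ((x + y) ^ (k + l - i) * y ^ i) := by
  obtain ⟨K, rfl⟩ := Nat.exists_eq_add_of_le' hk
  obtain ⟨L, rfl⟩ := Nat.exists_eq_add_of_le' hl
  rw [one_div_pow_succ_mul_pow_succ_eq_partialFractionSum hx hy hxy, partialFractionSum,
    partialFractionSum,
    sum_Icc_one_eq_sum_range_sub, sum_Icc_one_eq_sum_range_sub]
  congr 1 <;> refine sum_congr rfl fun j hj => ?_ <;> rw [mem_range] at hj
  · rw [show K + 1 + (L + 1) - (K + 1 - j) - 1 = L + j by omega,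
      show K + 1 + (L + 1) - (K + 1 - j) = L + 1 + j by omega, Nat.add_sub_cancel]
  · rw [show K + 1 + (L + 1) - (L + 1 - j) - 1 = K + j by omega,
      show K + 1 + (L + 1) - (L + 1 - j) = K + 1 + j by omega, Nat.add_sub_cancel]

end PartialFractions

theorem zetaVal_eq_tsum (s : ℕ) : zetaVal s = ∑' m : ℕ, 1 / ((m : ℝ) + 1) ^ s := by
  have hsupp : Function.support (fun m : ℕ => if 1 ≤ m then 1 / (m : ℝ) ^ s else 0) ⊆
      Set.range Nat.succ := by
    intro m hm
    have : 1 ≤ m := by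
      by_contra h
      simp [h] at hm
    exact ⟨m - 1, by omega⟩
  rw [zetaVal, ← Nat.succ_injective.tsum_eq hsupp]
  simp

theorem doubleZeta_eq_tsum_left (a b : ℕ) :
    doubleZeta a b =
      ∑' p : ℕ × ℕ, 1 / (((p.1 : ℝ) + 1 + ((p.2 : ℝ) + 1)) ^ a * ((p.1 : ℝ) + 1) ^ b) := by
  have hinj : Function.Injective fun p : ℕ × ℕ => (p.1 + p.2 + 2, p.1 + 1) := by
    rintro ⟨m, n⟩ ⟨m', n'⟩ h
    simp only [Prod.mk.injEq] at h
    ext <;> omega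
  have hsupp : Function.support (fun q : ℕ × ℕ =>
      if 1 ≤ q.2 ∧ q.2 < q.1 then 1 / ((q.1 : ℝ) ^ a * (q.2 : ℝ) ^ b) else 0) ⊆
      Set.range fun p : ℕ × ℕ => (p.1 + p.2 + 2, p.1 + 1) := by
    rintro ⟨M, N⟩ hq
    have : 1 ≤ N ∧ N < M := by
      by_contra h
      simp [h] at hq
    exact ⟨(N - 1, M - N - 1), by ext <;> simp <;> omega⟩
  rw [doubleZeta, ← hinj.tsum_eq hsupp]
  refine tsum_congr fun p => ?_
  rw [if_pos (by omega)]
  push_cast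
  ring_nf

theorem doubleZeta_eq_tsum_right (a b : ℕ) :
    doubleZeta a b =
      ∑' p : ℕ × ℕ, 1 / (((p.1 : ℝ) + 1 + ((p.2 : ℝ) + 1)) ^ a * ((p.2 : ℝ) + 1) ^ b) := by
  rw [doubleZeta_eq_tsum_left, ← (Equiv.prodComm ℕ ℕ).tsum_eq]
  simp only [Equiv.prodComm_apply, Prod.fst_swap, Prod.snd_swap, add_comm]

theorem summable_one_div_nat_add_one_pow {s : ℕ} (hs : 2 ≤ s) :
    Summable fun m : ℕ => 1 / ((m : ℝ) + 1) ^ s := by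
  exact_mod_cast (summable_nat_add_iff 1).mpr (Real.summable_one_div_nat_pow.mpr (by omega))

theorem hasSum_zetaVal_mul_zetaVal {k l : ℕ} (hk : 2 ≤ k) (hl : 2 ≤ l) :
    HasSum (fun p : ℕ × ℕ => 1 / (((p.1 : ℝ) + 1) ^ k * ((p.2 : ℝ) + 1) ^ l))
      (zetaVal k * zetaVal l) := by
  have hk' := (summable_one_div_nat_add_one_pow hk).norm
  have hl' := (summable_one_div_nat_add_one_pow hl).norm
  rw [zetaVal_eq_tsum, zetaVal_eq_tsum, tsum_mul_tsum_of_summable_norm hk' hl']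
  simpa only [one_div_mul_one_div] using (summable_mul_of_summable_norm hk' hl').hasSum

theorem tsum_sum_add_sum_of_nonneg {α ι κ : Type*} {s : Finset ι} {t : Finset κ}
    {f : ι → α → ℝ} {g : κ → α → ℝ} (hf : ∀ i ∈ s, ∀ a, 0 ≤ f i a)
    (hg : ∀ j ∈ t, ∀ a, 0 ≤ g j a) (h : Summable fun a => ∑ i ∈ s, f i a + ∑ j ∈ t, g j a) :
    ∑' a, (∑ i ∈ s, f i a + ∑ j ∈ t, g j a) =
      ∑ i ∈ s, ∑' a, f i a + ∑ j ∈ t, ∑' a, g j a := by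
  have hsf : ∀ i ∈ s, Summable (f i) := fun i hi => h.of_nonneg_of_le (hf i hi) fun a =>
    (single_le_sum (fun i hi => hf i hi a) hi).trans
      (le_add_of_nonneg_right (sum_nonneg fun j hj => hg j hj a))
  have hsg : ∀ j ∈ t, Summable (g j) := fun j hj => h.of_nonneg_of_le (hg j hj) fun a =>
    (single_le_sum (fun j hj => hg j hj a) hj).trans
      (le_add_of_nonneg_left (sum_nonneg fun i hi => hf i hi a))
  rw [(summable_sum hsf).tsum_add (summable_sum hsg), Summable.tsum_finsetSum hsf,
    Summable.tsum_finsetSum hsg]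

theorem euler_decomposition (k l : ℕ) (hk : 2 ≤ k) (hl : 2 ≤ l) :
    zetaVal k * zetaVal l =
      ∑ i ∈ Finset.Icc 1 k, (Nat.choose (k + l - i - 1) (l - 1) : ℝ) * doubleZeta (k + l - i) i +
        ∑ i ∈ Finset.Icc 1 l,
          (Nat.choose (k + l - i - 1) (k - 1) : ℝ) * doubleZeta (k + l - i) i := by
  have hpf (p : ℕ × ℕ) := one_div_pow_mul_pow_eq_sum (x := (p.1 : ℝ) + 1) (y := (p.2 : ℝ) + 1)
    (by positivity) (by positivity) (by positivity) (by omega : 1 ≤ k) (by omega : 1 ≤ l)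
  have h := hasSum_zetaVal_mul_zetaVal hk hl
  simp only [hpf] at h
  rw [← h.tsum_eq, tsum_sum_add_sum_of_nonneg (fun _ _ _ => by positivity)
    (fun _ _ _ => by positivity) h.summable]
  congr 1 <;> refine sum_congr rfl fun i _ => ?_
  · simp only [doubleZeta_eq_tsum_left, ← tsum_mul_left, mul_one_div]
  · simp only [doubleZeta_eq_tsum_right, ← tsum_mul_left, mul_one_div]
end

section
/- For integers k, l ≥ 2 and a real parameter t, with ζ^t(a,b) = ζ(a,b) + t·ζ(a+b), the finite double shuffle relation holds: (1 + (C(k+l, k) − 2)·t) · ζ(k+l) = ∑_{i=1}^{k-1} C(k+l-i-1, l-1) · ζ^t(k+l-i, i) + ∑_{i=1}^{l-1} C(k+l-i-1, k-1) · ζ^t(k+l-i, i). -/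
open Finset

/-- The interpolated double zeta value `ζ^t(a,b) = ζ(a,b) + t·ζ(a+b)`. -/
noncomputable def tDoubleZeta (t : ℝ) (a b : ℕ) : ℝ :=
  doubleZeta a b + t * zetaVal (a + b)

/-!
Euler's partial fraction decomposition
`1/(x^k y^l) = ∑_{r=1}^{k} C(k+l-r-1, l-1)/((x+y)^(k+l-r) x^r)`
`              + ∑_{r=1}^{l} C(k+l-r-1, k-1)/((x+y)^(k+l-r) y^r)`,
summed over `x, y ≥ 1` after the substitutions `(m, n) = (x + y, x)` and `(m, n) = (x + y, y)`,
writes `ζ(k)ζ(l)` as a combination of the double zeta values `ζ(k+l-r, r)`, in which the terms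
`r = k` and `r = l` are `ζ(l,k)` and `ζ(k,l)`. Subtracting the harmonic product
`ζ(k)ζ(l) = ζ(k,l) + ζ(l,k) + ζ(k+l)` leaves the relation at `t = 0`. The `t`-part is `ζ(k+l)` times
the sum of the coefficients, which by the hockey-stick identity is
`C(k+l-1, l) + C(k+l-1, k) - 2 = C(k+l, k) - 2`. All series involved have nonnegative terms
dominated by `1/(x^k y^l)`, which justifies every rearrangement.
-/

section PartialFractions

variable {K : Type*} [Field K]

/- The coefficient `C(k+l-r-1, k-r)` equals `C(k+l-r-1, l-1)` when `l ≥ 1`; written this way, with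
truncated subtraction, the case `l = 0` is `1 / x^k`, the base case of the induction proving
`one_div_pow_mul_pow_eq_eulerPartialFraction`. -/
noncomputable def eulerPartialFraction (k l : ℕ) (x y : K) : K :=
  ∑ r ∈ Icc 1 k, ((k + l - r - 1).choose (k - r) : K) / ((x + y) ^ (k + l - r) * x ^ r)

@[simp]
lemma eulerPartialFraction_zero_left (l : ℕ) (x y : K) : eulerPartialFraction 0 l x y = 0 := by
  simp [eulerPartialFraction]

lemma eulerPartialFraction_zero_right {k : ℕ} (hk : k ≠ 0) (x y : K) :
    eulerPartialFraction k 0 x y = 1 / x ^ k := by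
  rw [eulerPartialFraction, sum_eq_single_of_mem k (mem_Icc.2 ⟨by omega, le_rfl⟩)]
  · simp
  · intro r hr hrk
    rw [Nat.choose_eq_zero_of_lt (by rw [mem_Icc] at hr; omega), Nat.cast_zero, zero_div]

lemma eulerPartialFraction_succ_succ (k l : ℕ) (x y : K) :
    eulerPartialFraction (k + 1) (l + 1) x y =
      (x + y)⁻¹ * (eulerPartialFraction k (l + 1) x y + eulerPartialFraction (k + 1) l x y) := by
  simp only [eulerPartialFraction, sum_Icc_succ_top (by omega : 1 ≤ k + 1), mul_add, mul_sum]
  have hpascal : ∀ r ∈ Icc 1 k,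
      ((k + 1 + (l + 1) - r - 1).choose (k + 1 - r) : K) /
          ((x + y) ^ (k + 1 + (l + 1) - r) * x ^ r) =
        (x + y)⁻¹ * (((k + (l + 1) - r - 1).choose (k - r) : K) /
          ((x + y) ^ (k + (l + 1) - r) * x ^ r)) +
        (x + y)⁻¹ * (((k + 1 + l - r - 1).choose (k + 1 - r) : K) /
          ((x + y) ^ (k + 1 + l - r) * x ^ r)) := by
    intro r hr
    simp only [mem_Icc] at hr
    obtain ⟨n, hn⟩ : ∃ n, k + l - r = n := ⟨_, rfl⟩
    rw [show k + 1 + (l + 1) - r - 1 = n + 1 by omega, show k + 1 - r = k - r + 1 by omega,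
      show k + (l + 1) - r - 1 = n by omega, show k + 1 + l - r - 1 = n by omega,
      show k + 1 + (l + 1) - r = n + 2 by omega, show k + (l + 1) - r = n + 1 by omega,
      show k + 1 + l - r = n + 1 by omega, Nat.choose_succ_succ, Nat.cast_add]
    field_simp
    ring
  rw [sum_congr rfl hpascal, sum_add_distrib, add_assoc]
  congr 2
  simp only [Nat.sub_self, Nat.choose_zero_right, show k + 1 + (l + 1) - (k + 1) = l + 1 by omega,
    show k + 1 + l - (k + 1) = l by omega, Nat.cast_one, pow_succ, one_div, mul_inv]
  ring

theorem one_div_pow_mul_pow_eq_eulerPartialFraction {x y : K} (hx : x ≠ 0) (hy : y ≠ 0)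
    (hxy : x + y ≠ 0) {k l : ℕ} (hkl : k ≠ 0 ∨ l ≠ 0) :
    1 / (x ^ k * y ^ l) = eulerPartialFraction k l x y + eulerPartialFraction l k y x := by
  induction k generalizing l with
  | zero =>
    simp [eulerPartialFraction_zero_right (hkl.resolve_left (by simp))]
  | succ k ih =>
    induction l with
    | zero => simp [eulerPartialFraction_zero_right]
    | succ l ihl =>
      have hsplit : 1 / (x ^ (k + 1) * y ^ (l + 1)) =
          (x + y)⁻¹ * (1 / (x ^ k * y ^ (l + 1)) + 1 / (x ^ (k + 1) * y ^ l)) := by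
        field_simp
        ring
      rw [hsplit, ih (by simp), ihl (by simp), eulerPartialFraction_succ_succ,
        eulerPartialFraction_succ_succ l, add_comm y x]
      ring

end PartialFractions

section NonnegSums

variable {β : Type*}

lemma tsum_add_of_nonneg {f g : β → ℝ} (h : Summable fun b => f b + g b) (hf : 0 ≤ f)
    (hg : 0 ≤ g) :
    ∑' b, (f b + g b) = ∑' b, f b + ∑' b, g b :=
  (h.of_nonneg_of_le hf fun b => le_add_of_nonneg_right (hg b)).tsum_add
    (h.of_nonneg_of_le hg fun b => le_add_of_nonneg_left (hf b))

lemma tsum_finsetSum_of_nonneg {ι : Type*} {s : Finset ι} {f : ι → β → ℝ}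
    (h : Summable fun b => ∑ i ∈ s, f i b) (hf : ∀ i ∈ s, 0 ≤ f i) :
    ∑' b, ∑ i ∈ s, f i b = ∑ i ∈ s, ∑' b, f i b :=
  Summable.tsum_finsetSum fun i hi =>
    h.of_nonneg_of_le (hf i hi) fun b => single_le_sum (fun j hj => hf j hj b) hi

lemma tsum_finsetSum_add_finsetSum_of_nonneg {ι κ : Type*} {s : Finset ι} {t : Finset κ}
    {f : ι → β → ℝ} {g : κ → β → ℝ} (h : Summable fun b => ∑ i ∈ s, f i b + ∑ j ∈ t, g j b)
    (hf : ∀ i ∈ s, 0 ≤ f i) (hg : ∀ j ∈ t, 0 ≤ g j) :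
    ∑' b, (∑ i ∈ s, f i b + ∑ j ∈ t, g j b) = ∑ i ∈ s, ∑' b, f i b + ∑ j ∈ t, ∑' b, g j b := by
  have hF : 0 ≤ fun b => ∑ i ∈ s, f i b := fun b => sum_nonneg fun i hi => hf i hi b
  have hG : 0 ≤ fun b => ∑ j ∈ t, g j b := fun b => sum_nonneg fun j hj => hg j hj b
  rw [tsum_add_of_nonneg h hF hG,
    tsum_finsetSum_of_nonneg (h.of_nonneg_of_le hF fun b => le_add_of_nonneg_right (hG b)) hf,
    tsum_finsetSum_of_nonneg (h.of_nonneg_of_le hG fun b => le_add_of_nonneg_left (hF b)) hg]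

end NonnegSums

section Reindexing

variable {α : Type*} [AddCommMonoid α] [TopologicalSpace α]

lemma tsum_add_fst_eq_tsum {f : ℕ × ℕ → α} (hf : ∀ p, f p ≠ 0 → p.2 ≤ p.1) :
    ∑' p : ℕ × ℕ, f (p.1 + p.2, p.1) = ∑' p, f p := by
  refine Function.Injective.tsum_eq (f := fun p : ℕ × ℕ => f p) ?_ fun p hp => ?_
  · rintro ⟨a, b⟩ ⟨c, d⟩ h
    simp only [Prod.mk.injEq] at h ⊢
    omega
  · exact ⟨(p.2, p.1 - p.2), Prod.ext (by have := hf p hp; dsimp; omega) rfl⟩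

lemma tsum_add_snd_eq_tsum {f : ℕ × ℕ → α} (hf : ∀ p, f p ≠ 0 → p.2 ≤ p.1) :
    ∑' p : ℕ × ℕ, f (p.1 + p.2, p.2) = ∑' p, f p := by
  rw [← tsum_add_fst_eq_tsum hf, ← (Equiv.prodComm ℕ ℕ).tsum_eq]
  simp [add_comm]

lemma tsum_diag_eq_tsum (f : ℕ → α) :
    ∑' p : ℕ × ℕ, (if p.1 = p.2 then f p.1 else 0) = ∑' m, f m := by
  have hsupp : (Function.support fun p : ℕ × ℕ => if p.1 = p.2 then f p.1 else 0) ⊆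
      Set.range fun m => (m, m) := fun p hp => by
    have h : p.1 = p.2 := by by_contra h; simp [h] at hp
    exact ⟨p.1, Prod.ext rfl h⟩
  rw [← Function.Injective.tsum_eq (fun a b h => congrArg Prod.fst h) hsupp]
  simp

end Reindexing

noncomputable def zetaTerm (s m : ℕ) : ℝ :=
  if 1 ≤ m then 1 / (m : ℝ) ^ s else 0

noncomputable def doubleZetaTerm (a b : ℕ) (p : ℕ × ℕ) : ℝ :=
  if 1 ≤ p.2 ∧ p.2 < p.1 then 1 / ((p.1 : ℝ) ^ a * (p.2 : ℝ) ^ b) else 0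

lemma zetaTerm_nonneg (s m : ℕ) : 0 ≤ zetaTerm s m := by
  unfold zetaTerm; positivity

lemma doubleZetaTerm_nonneg (a b : ℕ) (p : ℕ × ℕ) : 0 ≤ doubleZetaTerm a b p := by
  unfold doubleZetaTerm; positivity

lemma summable_zetaTerm {s : ℕ} (hs : 2 ≤ s) : Summable (zetaTerm s) :=
  (Real.summable_one_div_nat_pow.2 (by omega : 1 < s)).of_nonneg_of_le (zetaTerm_nonneg s)
    fun m => by unfold zetaTerm; split_ifs <;> simp

lemma hasSum_zetaTerm_mul_zetaTerm {k l : ℕ} (hk : 2 ≤ k) (hl : 2 ≤ l) :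
    HasSum (fun p : ℕ × ℕ => zetaTerm k p.1 * zetaTerm l p.2) (zetaVal k * zetaVal l) :=
  (summable_zetaTerm hk).hasSum.mul (summable_zetaTerm hl).hasSum
    ((summable_zetaTerm hk).mul_of_nonneg (summable_zetaTerm hl) (zetaTerm_nonneg k)
      (zetaTerm_nonneg l))

lemma le_of_doubleZetaTerm_ne_zero {a b : ℕ} {p : ℕ × ℕ} (hp : doubleZetaTerm a b p ≠ 0) :
    p.2 ≤ p.1 := by
  by_contra h
  exact hp (if_neg fun hlt => h hlt.2.le)

lemma tsum_doubleZetaTerm_add_fst (a b : ℕ) :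
    ∑' p : ℕ × ℕ, doubleZetaTerm a b (p.1 + p.2, p.1) = doubleZeta a b :=
  tsum_add_fst_eq_tsum fun _ => le_of_doubleZetaTerm_ne_zero

lemma tsum_doubleZetaTerm_add_snd (a b : ℕ) :
    ∑' p : ℕ × ℕ, doubleZetaTerm a b (p.1 + p.2, p.2) = doubleZeta a b :=
  tsum_add_snd_eq_tsum fun _ => le_of_doubleZetaTerm_ne_zero

lemma zetaTerm_mul_zetaTerm_eq_add (k l m n : ℕ) :
    zetaTerm k m * zetaTerm l n = doubleZetaTerm k l (m, n) + doubleZetaTerm l k (n, m) +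
      if m = n then zetaTerm (k + l) m else 0 := by
  unfold zetaTerm doubleZetaTerm
  rcases lt_trichotomy m n with h | rfl | h <;> split_ifs <;> first | omega | ring

lemma eulerPartialFraction_natCast (k : ℕ) {l m n : ℕ} (hl : 1 ≤ l) (hm : 1 ≤ m) (hn : 1 ≤ n) :
    eulerPartialFraction k l (m : ℝ) n =
      ∑ r ∈ Icc 1 k,
        ((k + l - r - 1).choose (l - 1) : ℝ) * doubleZetaTerm (k + l - r) r (m + n, m) := by
  refine sum_congr rfl fun r hr => ?_
  simp only [mem_Icc] at hr
  rw [Nat.choose_symm_of_eq_add (by omega : k + l - r - 1 = (k - r) + (l - 1)), doubleZetaTerm,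
    if_pos (by dsimp only; omega)]
  push_cast
  ring

lemma zetaTerm_mul_zetaTerm_eq_sum {k l : ℕ} (hk : 1 ≤ k) (hl : 1 ≤ l) (m n : ℕ) :
    zetaTerm k m * zetaTerm l n =
      ∑ r ∈ Icc 1 k,
          ((k + l - r - 1).choose (l - 1) : ℝ) * doubleZetaTerm (k + l - r) r (m + n, m) +
        ∑ r ∈ Icc 1 l,
          ((k + l - r - 1).choose (k - 1) : ℝ) * doubleZetaTerm (k + l - r) r (m + n, n) := by
  rcases Nat.eq_zero_or_pos m with rfl | hm
  · simp [zetaTerm, doubleZetaTerm]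
  rcases Nat.eq_zero_or_pos n with rfl | hn
  · simp [zetaTerm, doubleZetaTerm]
  have hpos : (0 : ℝ) < m ∧ (0 : ℝ) < n := ⟨by exact_mod_cast hm, by exact_mod_cast hn⟩
  rw [zetaTerm, zetaTerm, if_pos (show 1 ≤ m from hm), if_pos (show 1 ≤ n from hn),
    div_mul_div_comm, one_mul,
    one_div_pow_mul_pow_eq_eulerPartialFraction hpos.1.ne' hpos.2.ne' (by linarith) (by omega),
    eulerPartialFraction_natCast k hl hm hn, eulerPartialFraction_natCast l hk hn hm,
    add_comm n m, add_comm l k]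

theorem zetaVal_mul_zetaVal_harmonic {k l : ℕ} (hk : 2 ≤ k) (hl : 2 ≤ l) :
    zetaVal k * zetaVal l = doubleZeta k l + doubleZeta l k + zetaVal (k + l) := by
  have hsum := hasSum_zetaTerm_mul_zetaTerm hk hl
  rw [funext fun p : ℕ × ℕ => zetaTerm_mul_zetaTerm_eq_add k l p.1 p.2] at hsum
  have hA := doubleZetaTerm_nonneg k l
  have hB : 0 ≤ fun p : ℕ × ℕ => doubleZetaTerm l k (p.2, p.1) :=
    fun p => doubleZetaTerm_nonneg l k _
  have hC : 0 ≤ fun p : ℕ × ℕ => if p.1 = p.2 then zetaTerm (k + l) p.1 else 0 :=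
    fun p => ite_nonneg (zetaTerm_nonneg _ _) le_rfl
  have hswap : ∑' p : ℕ × ℕ, doubleZetaTerm l k (p.2, p.1) = doubleZeta l k :=
    (Equiv.prodComm ℕ ℕ).tsum_eq _
  rw [← hsum.tsum_eq, tsum_add_of_nonneg hsum.summable (fun p => add_nonneg (hA _) (hB p)) hC,
    tsum_add_of_nonneg (hsum.summable.of_nonneg_of_le (fun p => add_nonneg (hA _) (hB p))
      fun p => le_add_of_nonneg_right (hC p)) hA hB,
    hswap, tsum_diag_eq_tsum]
  rfl

noncomputable def eulerSum (k l : ℕ) (f : ℕ → ℕ → ℝ) : ℝ :=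
  ∑ i ∈ Icc 1 k, (Nat.choose (k + l - i - 1) (l - 1) : ℝ) * f (k + l - i) i +
    ∑ i ∈ Icc 1 l, (Nat.choose (k + l - i - 1) (k - 1) : ℝ) * f (k + l - i) i

noncomputable def finiteShuffleSum (k l : ℕ) (f : ℕ → ℕ → ℝ) : ℝ :=
  ∑ i ∈ Icc 1 (k - 1), (Nat.choose (k + l - i - 1) (l - 1) : ℝ) * f (k + l - i) i +
    ∑ i ∈ Icc 1 (l - 1), (Nat.choose (k + l - i - 1) (k - 1) : ℝ) * f (k + l - i) i

lemma eulerSum_eq_finiteShuffleSum_add {k l : ℕ} (hk : 1 ≤ k) (hl : 1 ≤ l) (f : ℕ → ℕ → ℝ) :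
    eulerSum k l f = finiteShuffleSum k l f + f l k + f k l := by
  obtain ⟨a, rfl⟩ := Nat.exists_eq_add_of_le' hk
  obtain ⟨b, rfl⟩ := Nat.exists_eq_add_of_le' hl
  simp only [eulerSum, finiteShuffleSum, sum_Icc_succ_top (by omega : 1 ≤ a + 1),
    sum_Icc_succ_top (by omega : 1 ≤ b + 1), Nat.add_sub_cancel]
  rw [show a + 1 + (b + 1) - (a + 1) = b + 1 by omega, Nat.add_sub_cancel, Nat.choose_self,
    Nat.choose_self]
  push_cast
  ring

lemma sum_Icc_choose_sub_sub_one (k : ℕ) {l : ℕ} (hl : 1 ≤ l) :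
    ∑ i ∈ Icc 1 k, (k + l - i - 1).choose (l - 1) = (k + l - 1).choose l := by
  have hreflect : ∑ i ∈ Icc 1 k, (k + l - i - 1).choose (l - 1) =
      ∑ j ∈ range k, (j + (l - 1)).choose (l - 1) :=
    sum_nbij' (fun i => k - i) (fun j => k - j)
      (fun i hi => by rw [mem_Icc] at hi; rw [mem_range]; omega)
      (fun j hj => by rw [mem_range] at hj; rw [mem_Icc]; omega)
      (fun i hi => by rw [mem_Icc] at hi; omega) (fun j hj => by rw [mem_range] at hj; omega)
      fun i hi => by rw [mem_Icc] at hi; congr 1; omega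
  rcases k with _ | n
  · simp [Nat.choose_eq_zero_of_lt (by omega : l - 1 < l)]
  · rw [hreflect, Nat.sum_range_add_choose, show n + (l - 1) + 1 = n + 1 + l - 1 by omega,
      Nat.sub_add_cancel hl]

lemma eulerSum_one {k l : ℕ} (hk : 1 ≤ k) (hl : 1 ≤ l) :
    eulerSum k l (fun _ _ => 1) = (k + l).choose k := by
  have hl' := sum_Icc_choose_sub_sub_one k hl
  have hk' := sum_Icc_choose_sub_sub_one l hk
  rw [add_comm l k] at hk'
  simp only [eulerSum, mul_one]
  rw [← Nat.cast_sum, ← Nat.cast_sum, hl', hk']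
  obtain ⟨a, rfl⟩ := Nat.exists_eq_add_of_le' hk
  obtain ⟨b, rfl⟩ := Nat.exists_eq_add_of_le' hl
  norm_cast
  rw [show a + 1 + (b + 1) - 1 = a + b + 1 by omega,
    show a + 1 + (b + 1) = a + b + 1 + 1 by omega,
    Nat.choose_symm_of_eq_add (show a + b + 1 = (b + 1) + a by omega)]
  exact (Nat.choose_succ_succ' (a + b + 1) a).symm

lemma sum_Icc_mul_tDoubleZeta (t : ℝ) (c : ℕ → ℝ) {m n : ℕ} (hmn : m ≤ n) :
    ∑ i ∈ Icc 1 m, c i * tDoubleZeta t (n - i) i =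
      ∑ i ∈ Icc 1 m, c i * doubleZeta (n - i) i + t * zetaVal n * ∑ i ∈ Icc 1 m, c i := by
  rw [mul_sum, ← sum_add_distrib]
  refine sum_congr rfl fun i hi => ?_
  rw [tDoubleZeta, Nat.sub_add_cancel (by simp only [mem_Icc] at hi; omega)]
  ring

lemma finiteShuffleSum_tDoubleZeta (t : ℝ) (k l : ℕ) :
    finiteShuffleSum k l (tDoubleZeta t) =
      finiteShuffleSum k l doubleZeta +
        t * zetaVal (k + l) * finiteShuffleSum k l (fun _ _ => 1) := by
  simp only [finiteShuffleSum, sum_Icc_mul_tDoubleZeta t _ (by omega : k - 1 ≤ k + l),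
    sum_Icc_mul_tDoubleZeta t _ (by omega : l - 1 ≤ k + l), mul_one]
  ring

lemma finiteShuffleSum_one {k l : ℕ} (hk : 1 ≤ k) (hl : 1 ≤ l) :
    finiteShuffleSum k l (fun _ _ => 1) = (k + l).choose k - 2 := by
  have h := eulerSum_one hk hl
  rw [eulerSum_eq_finiteShuffleSum_add hk hl] at h
  linarith

theorem zetaVal_mul_zetaVal_eq_eulerSum {k l : ℕ} (hk : 2 ≤ k) (hl : 2 ≤ l) :
    zetaVal k * zetaVal l = eulerSum k l doubleZeta := by
  have hsum := hasSum_zetaTerm_mul_zetaTerm hk hl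
  rw [funext fun p : ℕ × ℕ =>
    zetaTerm_mul_zetaTerm_eq_sum (by omega : 1 ≤ k) (by omega : 1 ≤ l) p.1 p.2] at hsum
  have hterm (c a r : ℕ) (q : ℕ × ℕ) : 0 ≤ (c : ℝ) * doubleZetaTerm a r q :=
    mul_nonneg c.cast_nonneg (doubleZetaTerm_nonneg a r q)
  rw [← hsum.tsum_eq, tsum_finsetSum_add_finsetSum_of_nonneg hsum.summable
    (fun _ _ _ => hterm _ _ _ _) (fun _ _ _ => hterm _ _ _ _)]
  simp only [tsum_mul_left, tsum_doubleZetaTerm_add_fst, tsum_doubleZetaTerm_add_snd]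
  rfl

lemma finiteShuffleSum_doubleZeta {k l : ℕ} (hk : 2 ≤ k) (hl : 2 ≤ l) :
    finiteShuffleSum k l doubleZeta = zetaVal (k + l) := by
  have h := zetaVal_mul_zetaVal_eq_eulerSum hk hl
  rw [zetaVal_mul_zetaVal_harmonic hk hl,
    eulerSum_eq_finiteShuffleSum_add (by omega) (by omega)] at h
  linarith

theorem finite_double_shuffle (t : ℝ) (k l : ℕ) (hk : 2 ≤ k) (hl : 2 ≤ l) :
    (1 + ((Nat.choose (k + l) k : ℝ) - 2) * t) * zetaVal (k + l) =
      ∑ i ∈ Finset.Icc 1 (k - 1),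
          (Nat.choose (k + l - i - 1) (l - 1) : ℝ) * tDoubleZeta t (k + l - i) i +
        ∑ i ∈ Finset.Icc 1 (l - 1),
          (Nat.choose (k + l - i - 1) (k - 1) : ℝ) * tDoubleZeta t (k + l - i) i := by
  change _ = finiteShuffleSum k l (tDoubleZeta t)
  rw [finiteShuffleSum_tDoubleZeta, finiteShuffleSum_doubleZeta hk hl,
    finiteShuffleSum_one (by omega) (by omega)]
  ring
end

section
/- For every n ≥ 1 and variables c and s with s ∉ {1,...,n}, ∏_{l=1}^{n-1}(l + c·s) / ∏_{m=1}^{n}(m − s) = ∑_{m=1}^{n} (-1)^{m-1} · (∏_{l=1}^{n-1}(l + c·m)) / ((m-1)!·(n-m)!·(m − s)). -/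
open Finset

open Polynomial

lemma nat_prod_refl (m : ℕ) : ∏ k ∈ Finset.Icc 1 (m-1), (m - k) = (m-1).factorial := by
  have h : ∏ k ∈ Finset.Icc 1 (m - 1), k = (m-1).factorial := by
    rw [← Finset.Ico_add_one_right_eq_Icc, Finset.prod_Ico_id_eq_factorial]
  rw [← h]
  refine Finset.prod_nbij' (fun k => m - k) (fun j => m - j) ?_ ?_ ?_ ?_ ?_ <;>
    intros <;> simp only [mem_Icc] at * <;> omega

lemma nat_prod_shift (a b : ℕ) : ∏ k ∈ Finset.Icc (a+1) b, (k - a) = (b - a).factorial := by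
  have h : ∏ k ∈ Finset.Icc 1 (b - a), k = (b-a).factorial := by
    rw [← Finset.Ico_add_one_right_eq_Icc, Finset.prod_Ico_id_eq_factorial]
  rw [← h]
  refine Finset.prod_nbij' (fun k => k - a) (fun j => j + a) ?_ ?_ ?_ ?_ ?_ <;>
    intros <;> simp only [mem_Icc] at * <;> omega

lemma real_prod_low (m : ℕ) : ∏ k ∈ Finset.Icc 1 (m-1), ((m:ℝ) - k) = (m-1).factorial := by
  have h1 : ∀ k ∈ Finset.Icc 1 (m-1), ((m:ℝ) - k) = ((m - k : ℕ) : ℝ) := by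
    intro k hk; simp only [mem_Icc] at hk
    have hk' : k ≤ m := by omega
    push_cast [hk']; ring
  rw [Finset.prod_congr rfl h1, ← Nat.cast_prod, nat_prod_refl]

lemma real_prod_high (m n : ℕ) :
    ∏ k ∈ Finset.Icc (m+1) n, ((m:ℝ) - k) = (-1)^(n-m) * (n-m).factorial := by
  have h1 : ∀ k ∈ Finset.Icc (m+1) n, ((m:ℝ) - k) = -(((k - m : ℕ) : ℝ)) := by
    intro k hk; simp only [mem_Icc] at hk
    have hk' : m ≤ k := by omega
    push_cast [hk']; ring
  have h2 : ∀ k ∈ Finset.Icc (m+1) n, -(((k - m : ℕ):ℝ)) = (-1) * ((k - m : ℕ):ℝ) := by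
    intros; ring
  rw [Finset.prod_congr rfl h1, Finset.prod_congr rfl h2, Finset.prod_mul_distrib, Finset.prod_const, ← Nat.cast_prod, nat_prod_shift, Nat.card_Icc]
  congr 2
  omega

lemma erase_split (m n : ℕ) (h1 : 1 ≤ m) (h2 : m ≤ n) :
    (Finset.Icc 1 n).erase m = Finset.Icc 1 (m-1) ∪ Finset.Icc (m+1) n := by
  ext k
  simp only [Finset.mem_erase, Finset.mem_Icc, Finset.mem_union]
  omega

lemma prod_erase_eq (m n : ℕ) (h1 : 1 ≤ m) (h2 : m ≤ n) :
    ∏ k ∈ (Finset.Icc 1 n).erase m, ((m:ℝ) - k)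
      = (-1)^(n-m) * (m-1).factorial * (n-m).factorial := by
  rw [erase_split m n h1 h2, Finset.prod_union (by
    simp only [Finset.disjoint_left, Finset.mem_Icc]; omega),
    real_prod_low, real_prod_high]
  ring

lemma term_eq (n m : ℕ) (h1 : 1 ≤ m) (h2 : m ≤ n) (P E f1 f2 ms : ℝ)
    (hE : E ≠ 0) (hf1 : f1 ≠ 0) (hf2 : f2 ≠ 0) (hms : ms ≠ 0) :
    (P * (((-1)^(n-m) * f1 * f2)⁻¹ * E)) / (ms * ((-1)^(n-1) * E))
      = ((-1)^(m-1) * P) / (f1 * f2 * ms) := by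
  have hsign : ((-1:ℝ))^(n-m) * ((-1:ℝ))^(n-1) = (-1)^(m-1) := by
    rw [← pow_add, show n - m + (n-1) = (m-1) + 2*(n-m) by omega, pow_add, pow_mul]
    simp
  have hpow : ∀ k : ℕ, ((-1:ℝ))^k ≠ 0 := fun k => pow_ne_zero k (by norm_num)
  field_simp
  have hsq : ((-1:ℝ))^(m-1) * ((-1:ℝ))^(m-1) = 1 := by
    rw [← pow_add, ← two_mul, pow_mul]; norm_num
  linear_combination (-((-1:ℝ)^(m-1)) * P) * hsign + (-P) * hsq

open Finset Polynomial

theorem partial_fraction_height_one (n : ℕ) (hn : 1 ≤ n) (c s : ℝ)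
    (hs : ∀ m : ℕ, 1 ≤ m → m ≤ n → (m : ℝ) ≠ s) :
    (∏ m ∈ Finset.Icc 1 (n - 1), ((m : ℝ) + c * s)) /
        (∏ m ∈ Finset.Icc 1 n, ((m : ℝ) - s)) =
      ∑ m ∈ Finset.Icc 1 n,
        (-1 : ℝ) ^ (m - 1) * (∏ l ∈ Finset.Icc 1 (n - 1), ((l : ℝ) + c * m)) /
          ((m - 1).factorial * (n - m).factorial * ((m : ℝ) - s)) := by
  classical
  set p : ℝ[X] := ∏ m ∈ Finset.Icc 1 (n - 1), (Polynomial.C (m : ℝ) + Polynomial.C c * Polynomial.X) with hp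
  have hinj : Set.InjOn (fun m : ℕ => (m : ℝ)) ((Finset.Icc 1 n) : Set ℕ) :=
    fun a _ b _ h => Nat.cast_injective h
  have hdeg : p.degree < ((Finset.Icc 1 n).card : ℕ) := by
    have h1 : p.degree ≤ (n - 1 : ℕ) := by
      refine le_trans (Polynomial.degree_prod_le _ _) ?_
      have h2 : ∀ m ∈ Finset.Icc 1 (n-1),
          (Polynomial.C (m : ℝ) + Polynomial.C c * Polynomial.X).degree ≤ (1 : WithBot ℕ) := by
        intro m _
        refine le_trans (Polynomial.degree_add_le _ _) ?_
        simp only [max_le_iff]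
        constructor
        · exact le_trans Polynomial.degree_C_le (by norm_num)
        · exact Polynomial.degree_C_mul_X_le _
      refine le_trans (Finset.sum_le_sum h2) ?_
      rw [Finset.sum_const, Nat.card_Icc]
      simp [nsmul_eq_mul]
    refine lt_of_le_of_lt h1 ?_
    rw [Nat.card_Icc]
    exact_mod_cast Nat.cast_lt.mpr (by omega : n - 1 < n + 1 - 1)
  have key := Lagrange.eq_interpolate (s := Finset.Icc 1 n) (v := fun m : ℕ => (m : ℝ))
    (f := p) hinj hdeg
  have heval := congrArg (Polynomial.eval s) key
  rw [Lagrange.interpolate_apply, Polynomial.eval_finset_sum] at heval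
  simp only [Polynomial.eval_mul, Polynomial.eval_C, Lagrange.basis, Polynomial.eval_prod,
    Lagrange.basisDivisor, Polynomial.eval_sub, Polynomial.eval_X] at heval
  have hev : ∀ x : ℝ, Polynomial.eval x p = ∏ m ∈ Finset.Icc 1 (n-1), ((m:ℝ) + c * x) := by
    intro x; rw [hp, Polynomial.eval_prod]; simp
  rw [show (∏ m ∈ Finset.Icc 1 (n-1), ((m:ℝ) + c * s)) = Polynomial.eval s p from (hev s).symm,
    heval, Finset.sum_div]
  refine Finset.sum_congr rfl fun m hm => ?_
  rw [Finset.mem_Icc] at hm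
  obtain ⟨h1, h2⟩ := hm
  have hmem : m ∈ Finset.Icc 1 n := Finset.mem_Icc.mpr ⟨h1, h2⟩
  have hprod : ∏ k ∈ (Finset.Icc 1 n).erase m, (((m:ℝ) - k)⁻¹ * (s - k))
      = (((-1:ℝ))^(n-m) * (m-1).factorial * (n-m).factorial)⁻¹
        * ∏ k ∈ (Finset.Icc 1 n).erase m, (s - (k:ℝ)) := by
    rw [Finset.prod_mul_distrib, Finset.prod_inv_distrib, prod_erase_eq m n h1 h2]
  have hD : ∏ k ∈ Finset.Icc 1 n, ((k:ℝ) - s)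
      = ((m:ℝ) - s) * (((-1:ℝ))^(n-1) * ∏ k ∈ (Finset.Icc 1 n).erase m, (s - (k:ℝ))) := by
    rw [← Finset.mul_prod_erase _ _ hmem]
    congr 1
    have h3 : ∀ k ∈ (Finset.Icc 1 n).erase m, ((k:ℝ) - s) = (-1) * (s - k) := by intros; ring
    rw [Finset.prod_congr rfl h3, Finset.prod_mul_distrib, Finset.prod_const,
      Finset.card_erase_of_mem hmem, Nat.card_Icc]
    congr 2
  have hE : (∏ k ∈ (Finset.Icc 1 n).erase m, (s - (k:ℝ))) ≠ 0 := by
    refine Finset.prod_ne_zero_iff.mpr fun k hk => ?_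
    have hk' := Finset.mem_Icc.mp (Finset.mem_of_mem_erase hk)
    exact sub_ne_zero.mpr (Ne.symm (hs k hk'.1 hk'.2))
  have hms : (m:ℝ) - s ≠ 0 := sub_ne_zero.mpr (hs m h1 h2)
  rw [hev, hprod, hD]
  exact term_eq n m h1 h2 _ _ _ _ _ hE (by positivity) (by positivity) hms
end
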